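/- Fix an integer m ≥ 2 and a constant C_m > 0. For k ≥ 1 set ρ_k = e^{-λ/k}, δ_k = k^{-(1+2(1-H))}, b_n^{(k)} = ρ_k(1-ρ_k^n)/(1-ρ_k) and a_{n-j}^{(k)} = (1-ρ_k^{n-j+1})/(1-ρ_k), and define κ_m(n) = C_m ∑_{k=1}^∞ (b_n^{(k)})^m δ_k + C_m ∑_{j=1}^{n} ∑_{k=1}^∞ (a_{n-j}^{(k)})^m (1-ρ_k^m) δ_k. Then there exists a finite strictly positive constant D_m such that κ_m(n) / n^{m-2(1-H)} → D_m as n → ∞; i.e., the m-th cumulant of the centered partial sum of the long-range dependent infinite superposition of OU type processes over n time points grows like D_m · L(n) · n^{m-2(1-H)} up to the convergent slowly varying factor. -/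

import Mathlib

open Filter

/-- The model `m`-th cumulant of the centered partial sum over `n` time points of the
long-range dependent infinite superposition of OU type processes:
`κ_m(n) = C_m ∑_k (b_n^{(k)})^m δ_k + C_m ∑_{j=1}^n ∑_k (a_{n-j}^{(k)})^m (1-ρ_k^m) δ_k`,
where `ρ_k = e^{-λ/k}`, `δ_k = k^{-(1+2(1-H))}`, `b_n^{(k)} = ρ_k(1-ρ_k^n)/(1-ρ_k)`,
`a_{n-j}^{(k)} = (1-ρ_k^{n-j+1})/(1-ρ_k)`. (Here `k : ℕ` with `k+1` as the index `k ≥ 1`.) -/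
noncomputable def OUcumulant (H lam Cm : ℝ) (m n : ℕ) : ℝ :=
  Cm * (∑' k : ℕ,
      (Real.exp (-lam / ((k : ℝ) + 1)) * (1 - Real.exp (-lam / ((k : ℝ) + 1)) ^ n) /
          (1 - Real.exp (-lam / ((k : ℝ) + 1)))) ^ m *
        ((k : ℝ) + 1) ^ (-(1 + 2 * (1 - H)))) +
    Cm * ∑ j ∈ Finset.Icc 1 n, ∑' k : ℕ,
      ((1 - Real.exp (-lam / ((k : ℝ) + 1)) ^ (n - j + 1)) /
          (1 - Real.exp (-lam / ((k : ℝ) + 1)))) ^ m *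
        (1 - Real.exp (-lam / ((k : ℝ) + 1)) ^ m) *
        ((k : ℝ) + 1) ^ (-(1 + 2 * (1 - H)))

/-!
Write `a_ℓ = 1 + ρ + ⋯ + ρ^ℓ`, so that `b_n = a_n - 1` and `ρ a_ℓ = a_{ℓ+1} - 1`. The latter
makes `(a_n - 1)^m + ∑_{ℓ<n} a_ℓ^m (1 - ρ^m)` telescope to `∑_{ℓ<n} (a_ℓ^m - (a_ℓ - 1)^m)`, so
`κ_m(n) = C_m ∑_{ℓ<n} u_ℓ` with `u_ℓ = ∑_k (a_ℓ^m - (a_ℓ - 1)^m) δ_k`.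

With `δ_k = k^α`, `α = 2H - 3 ∈ (-2, -1)`, the quotient `u_ℓ / ℓ^{m+α}` is the integral over
`(0, ∞)` of a step function constant on the intervals `[k/ℓ, (k+1)/ℓ)`. Since `(k+1)/ℓ → x` and
`ℓ (1 - ρ_k) → λ/x` for `k = ⌊ℓx⌋`, it converges pointwise to `x^α m φ(x)^{m-1}` with
`φ(x) = x (1 - e^{-λ/x}) / λ`. The bounds `a_ℓ ≤ ℓ + 1` and `a_ℓ ≤ e^λ (k+1) / λ`, the latter
applied to one of the `m - 1 ≥ 1` factors of `(a_ℓ/ℓ)^{m-1}`, dominate it by a multiple of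
`min (x^{α+1}) (x^α)`, integrable since `-2 < α < -1`. Dominated convergence gives
`u_ℓ ~ c ℓ^{m+α}` with `c > 0`, and summing, `κ_m(n) ~ C_m c n^{m+α+1} / (m+α+1)`, where
`m + α + 1 = m - 2(1 - H)`.
-/

open Topology MeasureTheory Set

lemma pow_sub_pow_sub_one_nonneg {T : ℝ} (hT : 1 ≤ T) (m : ℕ) : 0 ≤ T ^ m - (T - 1) ^ m :=
  sub_nonneg.2 (pow_le_pow_left₀ (by linarith) (by linarith) m)

lemma pow_sub_pow_sub_one_le {T : ℝ} (hT : 1 ≤ T) (m : ℕ) :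
    T ^ m - (T - 1) ^ m ≤ m * T ^ (m - 1) := by
  have h := (le_abs_self _).trans (abs_pow_sub_pow_le T (T - 1) m)
  rwa [sub_sub_cancel, abs_one, one_mul, abs_of_nonneg (by linarith : (0 : ℝ) ≤ T),
    abs_of_nonneg (by linarith : (0 : ℝ) ≤ T - 1), max_eq_left (by linarith)] at h

lemma Finset.sum_Icc_one_sub_eq_sum_range {M : Type*} [AddCommMonoid M] (g : ℕ → M) (n : ℕ) :
    ∑ j ∈ Finset.Icc 1 n, g (n - j) = ∑ l ∈ Finset.range n, g l :=
  Finset.sum_nbij' (n - ·) (n - ·) (by simp; omega) (by simp; omega) (by simp; omega)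
    (by simp; omega) fun _ _ => rfl

lemma tendsto_pow_sub_pow_sub_one_div {u : ℕ → ℝ} {φ : ℝ}
    (hu : Tendsto (fun l : ℕ => u l / l) atTop (𝓝 φ)) (m : ℕ) :
    Tendsto (fun l : ℕ => (u l ^ m - (u l - 1) ^ m) / (l : ℝ) ^ (m - 1)) atTop
      (𝓝 (m * φ ^ (m - 1))) := by
  have hu' : Tendsto (fun l : ℕ => (u l - 1) / l) atTop (𝓝 φ) := by
    simpa [sub_div] using hu.sub tendsto_one_div_atTop_nhds_zero_nat
  have hsum := tendsto_finsetSum (Finset.range m) fun i _ => (hu.pow i).mul (hu'.pow (m - 1 - i))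
  have hlim : ∑ i ∈ Finset.range m, φ ^ i * φ ^ (m - 1 - i) = m * φ ^ (m - 1) := by
    rw [Finset.sum_congr rfl fun i hi => by
      rw [← pow_add, Nat.add_sub_cancel' (Nat.le_sub_one_of_lt (Finset.mem_range.1 hi))]]
    simp
  rw [hlim] at hsum
  refine hsum.congr fun l => ?_
  have hgeom := geom_sum₂_mul (u l) (u l - 1) m
  rw [sub_sub_cancel, mul_one] at hgeom
  rw [← hgeom, Finset.sum_div]
  refine Finset.sum_congr rfl fun i hi => ?_
  rw [div_pow, div_pow, div_mul_div_comm, ← pow_add,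
    Nat.add_sub_cancel' (Nat.le_sub_one_of_lt (Finset.mem_range.1 hi))]

lemma tendsto_one_sub_exp_neg_div :
    Tendsto (fun s : ℝ => (1 - Real.exp (-s)) / s) (𝓝[≠] 0) (𝓝 1) := by
  have hneg : Tendsto (fun s : ℝ => -s) (𝓝[≠] 0) (𝓝[≠] 0) :=
    tendsto_nhdsWithin_iff.2
      ⟨by simpa using ((continuous_neg.tendsto (0 : ℝ)).mono_left nhdsWithin_le_nhds),
        eventually_nhdsWithin_of_forall fun _ hs => neg_ne_zero.2 hs⟩
  have h := (Real.hasDerivAt_exp 0).tendsto_slope_zero.comp hneg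
  rw [Real.exp_zero] at h
  refine h.congr fun s => ?_
  simp only [Function.comp, zero_add, smul_eq_mul]
  field_simp
  ring

lemma tendsto_natFloor_mul_add_one_div {x : ℝ} (hx : 0 ≤ x) :
    Tendsto (fun l : ℕ => ((⌊(l : ℝ) * x⌋₊ : ℝ) + 1) / l) atTop (𝓝 x) := by
  have h := ((tendsto_nat_floor_mul_div_atTop hx).comp tendsto_natCast_atTop_atTop).add
    tendsto_one_div_atTop_nhds_zero_nat
  rw [add_zero] at h
  refine h.congr fun l => ?_
  simp [add_div, mul_comm]

lemma tendsto_sum_range_rpow_div {b : ℝ} (hb : 0 < b) :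
    Tendsto (fun n : ℕ => (∑ l ∈ Finset.range n, (l : ℝ) ^ b) / (n : ℝ) ^ (b + 1)) atTop
      (𝓝 (1 / (b + 1))) := by
  have hmono : ∀ n : ℕ, MonotoneOn (fun y : ℝ => y ^ b) (Icc 0 (0 + n)) :=
    fun n y hy z _ hyz => Real.rpow_le_rpow hy.1 hyz hb.le
  have hint : ∀ n : ℕ, ∫ y in (0 : ℝ)..0 + n, y ^ b = (n : ℝ) ^ (b + 1) / (b + 1) := fun n => by
    rw [integral_rpow (Or.inl (by linarith)), zero_add, Real.zero_rpow (by linarith), sub_zero]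
  have hupper : ∀ n : ℕ, ∑ l ∈ Finset.range n, (l : ℝ) ^ b ≤ (n : ℝ) ^ (b + 1) / (b + 1) := by
    intro n
    have h := (hmono n).sum_le_integral
    rw [hint] at h
    simpa using h
  have hlower : ∀ n : ℕ,
      (n : ℝ) ^ (b + 1) / (b + 1) ≤ ∑ l ∈ Finset.range n, (l : ℝ) ^ b + (n : ℝ) ^ b := by
    intro n
    have h := (hmono n).integral_le_sum
    rw [hint] at h
    have hshift : ∑ i ∈ Finset.range n, (0 + ((i + 1 : ℕ) : ℝ)) ^ b
        = ∑ l ∈ Finset.range n, (l : ℝ) ^ b + (n : ℝ) ^ b := by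
      rw [← Finset.sum_range_succ, Finset.sum_range_succ' (fun i : ℕ => (i : ℝ) ^ b)]
      simp [Real.zero_rpow hb.ne']
    rwa [hshift] at h
  have hlow : Tendsto (fun n : ℕ => 1 / (b + 1) - 1 / (n : ℝ)) atTop (𝓝 (1 / (b + 1))) := by
    simpa using (tendsto_const_nhds (x := 1 / (b + 1))).sub tendsto_one_div_atTop_nhds_zero_nat
  refine tendsto_of_tendsto_of_tendsto_of_le_of_le' hlow tendsto_const_nhds ?_ ?_ <;>
    filter_upwards [eventually_ge_atTop 1] with n hn <;>
    have hn0 : (0 : ℝ) < n := by exact_mod_cast hn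
  · rw [le_div_iff₀ (by positivity), Real.rpow_add_one hn0.ne']
    have h := hlower n
    rw [Real.rpow_add_one hn0.ne'] at h
    have e : (1 / (b + 1) - 1 / (n : ℝ)) * ((n : ℝ) ^ b * n)
        = (n : ℝ) ^ b * n / (b + 1) - (n : ℝ) ^ b := by
      field_simp
    linarith
  · rw [div_le_div_iff₀ (by positivity) (by linarith)]
    have := hupper n
    rw [le_div_iff₀ (by linarith)] at this
    linarith

lemma Filter.Tendsto.sum_range_div_rpow {v : ℕ → ℝ} {b c : ℝ} (hb : 0 < b)
    (hv : Tendsto (fun l : ℕ => v l / (l : ℝ) ^ b) atTop (𝓝 c)) :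
    Tendsto (fun n : ℕ => (∑ l ∈ Finset.range n, v l) / (n : ℝ) ^ (b + 1)) atTop
      (𝓝 (c / (b + 1))) := by
  have hS := tendsto_sum_range_rpow_div hb
  have hpow : Tendsto (fun n : ℕ => (n : ℝ) ^ (b + 1)) atTop atTop :=
    (tendsto_rpow_atTop (by linarith)).comp tendsto_natCast_atTop_atTop
  have hne : ∀ᶠ n : ℕ in atTop, (n : ℝ) ^ (b + 1) ≠ 0 := hpow.eventually_ne_atTop 0
  have herr : (fun l : ℕ => v l - c * (l : ℝ) ^ b) =o[atTop] fun l : ℕ => (l : ℝ) ^ b := by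
    have hpos : ∀ᶠ l : ℕ in atTop, (0 : ℝ) < (l : ℝ) ^ b := by
      filter_upwards [eventually_ge_atTop 1] with l hl
      exact Real.rpow_pos_of_pos (by exact_mod_cast hl) b
    rw [Asymptotics.isLittleO_iff_tendsto' (hpos.mono fun l h h0 => absurd h0 h.ne')]
    have h0 := hv.sub_const c
    rw [sub_self] at h0
    refine h0.congr' ?_
    filter_upwards [hpos] with l hl
    field_simp
  have hSbig : (fun n : ℕ => ∑ l ∈ Finset.range n, (l : ℝ) ^ b) =O[atTop]
      fun n : ℕ => (n : ℝ) ^ (b + 1) :=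
    Asymptotics.isBigO_of_div_tendsto_nhds (hne.mono fun n h h0 => absurd h0 h) _ hS
  have hStop : Tendsto (fun n : ℕ => ∑ l ∈ Finset.range n, (l : ℝ) ^ b) atTop atTop := by
    refine (hS.pos_mul_atTop (by positivity) hpow).congr' ?_
    filter_upwards [hne] with n hn
    field_simp
  have hsum := ((herr.sum_range (fun l => by positivity) hStop).trans_isBigO
    hSbig).tendsto_div_nhds_zero.add (hS.const_mul c)
  rw [zero_add, mul_one_div] at hsum
  refine hsum.congr fun n => ?_
  rw [Finset.sum_sub_distrib, ← Finset.mul_sum]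
  ring

section StepFunctions

variable {E : Type*} [NormedAddCommGroup E] [NormedSpace ℝ E] [CompleteSpace E]

lemma integral_Ioi_comp_natFloor {f : ℕ → E}
    (hf : IntegrableOn (fun x : ℝ => f ⌊x⌋₊) (Ioi 0)) :
    ∫ x in Ioi (0 : ℝ), f ⌊x⌋₊ = ∑' k, f k := by
  have hU : ⋃ k : ℕ, Ico (k : ℝ) (Order.succ k : ℕ) = Ici 0 := by
    simpa using iUnion_Ico_map_succ_eq_Ici (f := fun k : ℕ => (k : ℝ)) (fun k => by simp)
      fun ⟨b, hb⟩ => (exists_nat_gt b).elim fun n hn => (hb ⟨n, rfl⟩).not_gt hn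
  rw [← integral_Ici_eq_integral_Ioi, ← hU, integral_iUnion (fun _ => measurableSet_Ico)
    Nat.mono_cast.pairwise_disjoint_on_Ico_succ
    (by rwa [hU, integrableOn_Ici_iff_integrableOn_Ioi])]
  refine tsum_congr fun k => ?_
  rw [setIntegral_congr_fun measurableSet_Ico (g := fun _ => f k) fun x hx => ?_]
  · rw [setIntegral_const, Measure.real, Real.volume_Ico]; simp
  · simp only [Order.succ_eq_add_one, Nat.cast_add, Nat.cast_one, mem_Ico] at hx
    rw [Nat.floor_eq_on_Ico k x hx]

lemma integral_Ioi_comp_natFloor_mul {f : ℕ → E} {c : ℝ} (hc : 0 < c)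
    (hf : IntegrableOn (fun x : ℝ => f ⌊c * x⌋₊) (Ioi 0)) :
    ∫ x in Ioi (0 : ℝ), f ⌊c * x⌋₊ = c⁻¹ • ∑' k, f k := by
  rw [integrableOn_Ioi_comp_mul_left_iff (fun x => f ⌊x⌋₊) 0 hc, mul_zero] at hf
  rw [integral_comp_mul_left_Ioi (fun x => f ⌊x⌋₊) 0 hc, mul_zero, integral_Ioi_comp_natFloor hf]

end StepFunctions

lemma integrableOn_Ioi_min_rpow {α : ℝ} (h₁ : -2 < α) (h₂ : α < -1) :
    IntegrableOn (fun x : ℝ => min (x ^ (α + 1)) (x ^ α)) (Ioi 0) := by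
  have hmeas : AEStronglyMeasurable (fun x : ℝ => min (x ^ (α + 1)) (x ^ α)) := by
    fun_prop
  have hnorm : ∀ x : ℝ, 0 < x → ‖min (x ^ (α + 1)) (x ^ α)‖ = min (x ^ (α + 1)) (x ^ α) :=
    fun x hx => Real.norm_of_nonneg (by positivity)
  have hsmall : IntegrableOn (fun x : ℝ => x ^ (α + 1)) (Ioc 0 1) :=
    (intervalIntegrable_iff_integrableOn_Ioc_of_le zero_le_one).1
      (intervalIntegral.intervalIntegrable_rpow' (by linarith))
  have hlarge : IntegrableOn (fun x : ℝ => x ^ α) (Ioi 1) := integrableOn_Ioi_rpow_of_lt h₂ one_pos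
  rw [← Ioc_union_Ioi_eq_Ioi zero_le_one]
  refine IntegrableOn.union (hsmall.mono' hmeas.restrict ?_) (hlarge.mono' hmeas.restrict ?_)
  · refine (ae_restrict_iff' measurableSet_Ioc).2 (Eventually.of_forall fun x hx => ?_)
    rw [hnorm x hx.1]
    exact min_le_left _ _
  · refine (ae_restrict_iff' measurableSet_Ioi).2 (Eventually.of_forall fun x hx => ?_)
    rw [hnorm x (zero_lt_one.trans hx)]
    exact min_le_right _ _

lemma setIntegral_Ioi_pos {f : ℝ → ℝ} {a : ℝ} (hf : IntegrableOn f (Ioi a))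
    (hpos : ∀ x ∈ Ioi a, 0 < f x) : 0 < ∫ x in Ioi a, f x := by
  have hsupp : Function.support f ∩ Ioi a = Ioi a :=
    inter_eq_right.2 fun x hx => (hpos x hx).ne'
  rw [setIntegral_pos_iff_support_of_nonneg_ae
    (ae_restrict_of_forall_mem measurableSet_Ioi fun x hx => (hpos x hx).le) hf, hsupp,
    Real.volume_Ioi]
  exact ENNReal.zero_lt_top

namespace OUCumulant

noncomputable def rho (lam : ℝ) (k : ℕ) : ℝ := Real.exp (-lam / ((k : ℝ) + 1))

noncomputable def delta (α : ℝ) (k : ℕ) : ℝ := ((k : ℝ) + 1) ^ α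

noncomputable def geomSum (lam : ℝ) (l k : ℕ) : ℝ := ∑ i ∈ Finset.range (l + 1), rho lam k ^ i

noncomputable def term (α lam : ℝ) (m l k : ℕ) : ℝ :=
  (geomSum lam l k ^ m - (geomSum lam l k - 1) ^ m) * delta α k

noncomputable def increment (α lam : ℝ) (m l : ℕ) : ℝ := ∑' k, term α lam m l k

section Basic

variable {α lam : ℝ} {m l k : ℕ}

lemma rho_pos : 0 < rho lam k := Real.exp_pos _

lemma rho_lt_one (hlam : 0 < lam) : rho lam k < 1 :=
  Real.exp_lt_one_iff.2 (div_neg_of_neg_of_pos (neg_neg_of_pos hlam) (by positivity))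

lemma geomSum_zero : geomSum lam 0 k = 1 := by simp [geomSum]

lemma geomSum_succ : geomSum lam (l + 1) k = rho lam k * geomSum lam l k + 1 := geom_sum_succ

lemma one_le_geomSum : 1 ≤ geomSum lam l k := by
  rw [geomSum, Finset.sum_range_succ', pow_zero, le_add_iff_nonneg_left]
  exact Finset.sum_nonneg fun i _ => pow_nonneg rho_pos.le _

lemma geomSum_le (hlam : 0 < lam) : geomSum lam l k ≤ l + 1 := by
  calc geomSum lam l k ≤ ∑ _i ∈ Finset.range (l + 1), (1 : ℝ) :=
        Finset.sum_le_sum fun i _ => pow_le_one₀ rho_pos.le (rho_lt_one hlam).le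
    _ = l + 1 := by simp

lemma geomSum_eq_div (hlam : 0 < lam) :
    geomSum lam l k = (1 - rho lam k ^ (l + 1)) / (1 - rho lam k) := by
  rw [geomSum, geom_sum_eq (rho_lt_one hlam).ne, ← neg_sub 1, ← neg_sub 1, neg_div_neg_eq]

lemma rho_mul_div_eq_geomSum_sub_one (hlam : 0 < lam) (n : ℕ) :
    rho lam k * (1 - rho lam k ^ n) / (1 - rho lam k) = geomSum lam n k - 1 := by
  have := (sub_pos.2 (rho_lt_one (k := k) hlam)).ne'
  rw [geomSum_eq_div hlam]
  field_simp
  ring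

lemma geomSum_le_inv (hlam : 0 < lam) : geomSum lam l k ≤ (1 - rho lam k)⁻¹ := by
  rw [geomSum, Finset.range_eq_Ico]
  simpa using geom_sum_Ico_le_of_lt_one (m := 0) (n := l + 1) rho_pos.le (rho_lt_one (k := k) hlam)

lemma inv_one_sub_rho_le (hlam : 0 < lam) :
    (1 - rho lam k)⁻¹ ≤ Real.exp lam / lam * ((k : ℝ) + 1) := by
  set s := lam / ((k : ℝ) + 1)
  have hs : 0 < s := by positivity
  have hsl : s ≤ lam := div_le_self hlam.le (by simp)
  have hlow : s * Real.exp (-lam) ≤ 1 - rho lam k := by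
    have h1 : s * Real.exp (-s) ≤ 1 - Real.exp (-s) := by
      have := mul_le_mul_of_nonneg_right (Real.add_one_le_exp s) (Real.exp_pos (-s)).le
      rw [← Real.exp_add, add_neg_cancel, Real.exp_zero] at this
      linarith
    calc s * Real.exp (-lam) ≤ s * Real.exp (-s) := by gcongr
      _ ≤ 1 - rho lam k := by rwa [rho, neg_div]
  calc (1 - rho lam k)⁻¹ ≤ (s * Real.exp (-lam))⁻¹ := inv_anti₀ (by positivity) hlow
    _ = Real.exp lam / lam * ((k : ℝ) + 1) := by
      simp only [s, Real.exp_neg]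
      field_simp

lemma geomSum_le_mul (hlam : 0 < lam) : geomSum lam l k ≤ Real.exp lam / lam * ((k : ℝ) + 1) :=
  (geomSum_le_inv hlam).trans (inv_one_sub_rho_le hlam)

lemma geomSum_pow_mem (hlam : 0 < lam) : geomSum lam l k ^ m ∈ Icc 0 (((l : ℝ) + 1) ^ m) :=
  ⟨pow_nonneg (zero_le_one.trans one_le_geomSum) m,
    pow_le_pow_left₀ (zero_le_one.trans one_le_geomSum) (geomSum_le hlam) m⟩

lemma geomSum_sub_one_pow_mem (hlam : 0 < lam) :
    (geomSum lam l k - 1) ^ m ∈ Icc 0 (((l : ℝ) + 1) ^ m) :=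
  ⟨pow_nonneg (sub_nonneg.2 one_le_geomSum) m,
    pow_le_pow_left₀ (sub_nonneg.2 one_le_geomSum)
      (by linarith [geomSum_le (l := l) (k := k) hlam]) m⟩

lemma summable_delta (hα : α < -1) : Summable (delta α) := by
  refine ((summable_nat_add_iff 1).2 (Real.summable_nat_rpow.2 hα)).congr fun k => ?_
  simp [delta]

lemma summable_mul_delta (hα : α < -1) {f : ℕ → ℝ} {C : ℝ} (hf : ∀ k, |f k| ≤ C) :
    Summable fun k => f k * delta α k :=
  ((summable_delta hα).mul_left C).of_norm_bounded fun k => by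
    rw [norm_mul, Real.norm_eq_abs, Real.norm_of_nonneg (by unfold delta; positivity)]
    exact mul_le_mul_of_nonneg_right (hf k) (by unfold delta; positivity)

lemma summable_geomSum_sub_one_pow_mul_delta (hα : α < -1) (hlam : 0 < lam) (n : ℕ) :
    Summable fun k => (geomSum lam n k - 1) ^ m * delta α k :=
  summable_mul_delta hα fun _ =>
    (abs_of_nonneg (geomSum_sub_one_pow_mem hlam).1).trans_le (geomSum_sub_one_pow_mem hlam).2

lemma summable_geomSum_pow_mul_delta (hα : α < -1) (hlam : 0 < lam) (l : ℕ) :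
    Summable fun k => geomSum lam l k ^ m * (1 - rho lam k ^ m) * delta α k :=
  summable_mul_delta hα fun k => by
    have hρ : |1 - rho lam k ^ m| ≤ 1 :=
      abs_sub_le_of_nonneg_of_le zero_le_one le_rfl (pow_nonneg rho_pos.le m)
        (pow_le_one₀ rho_pos.le (rho_lt_one hlam).le)
    rw [abs_mul, abs_of_nonneg (geomSum_pow_mem hlam).1]
    exact (mul_le_of_le_one_right (geomSum_pow_mem hlam).1 hρ).trans (geomSum_pow_mem hlam).2

lemma summable_term (hα : α < -1) (hlam : 0 < lam) (l : ℕ) : Summable (term α lam m l) :=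
  summable_mul_delta hα fun _ =>
    abs_sub_le_of_nonneg_of_le (geomSum_pow_mem hlam).1 (geomSum_pow_mem hlam).2
      (geomSum_sub_one_pow_mem hlam).1 (geomSum_sub_one_pow_mem hlam).2

end Basic

section Telescoping

variable {α lam : ℝ} {m : ℕ}

lemma geomSum_sub_one_pow_add_sum (hm : m ≠ 0) (n k : ℕ) :
    (geomSum lam n k - 1) ^ m
      + ∑ l ∈ Finset.range n, geomSum lam l k ^ m * (1 - rho lam k ^ m)
      = ∑ l ∈ Finset.range n, (geomSum lam l k ^ m - (geomSum lam l k - 1) ^ m) := by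
  induction n with
  | zero => simp [geomSum_zero, hm]
  | succ n ih =>
    rw [Finset.sum_range_succ, Finset.sum_range_succ, ← ih, geomSum_succ]
    ring

lemma OUcumulant_eq_sum_increment {H : ℝ} (hH : H < 1) (hlam : 0 < lam) (hm : m ≠ 0)
    (Cm : ℝ) (n : ℕ) :
    OUcumulant H lam Cm m n
      = Cm * ∑ l ∈ Finset.range n, increment (-(1 + 2 * (1 - H))) lam m l := by
  have hα : -(1 + 2 * (1 - H)) < -1 := by linarith
  have hρ : ∀ k : ℕ, Real.exp (-lam / ((k : ℝ) + 1)) = rho lam k := fun _ => rfl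
  have hδ : ∀ k : ℕ, ((k : ℝ) + 1) ^ (-(1 + 2 * (1 - H))) = delta (-(1 + 2 * (1 - H))) k :=
    fun _ => rfl
  have ha : ∀ l k : ℕ, (1 - rho lam k ^ (l + 1)) / (1 - rho lam k) = geomSum lam l k :=
    fun _ _ => (geomSum_eq_div hlam).symm
  have hsumA := fun l (_ : l ∈ Finset.range n) => summable_geomSum_pow_mul_delta (m := m) hα hlam l
  unfold OUcumulant increment
  simp only [hρ, hδ, rho_mul_div_eq_geomSum_sub_one hlam, ha]
  rw [Finset.sum_Icc_one_sub_eq_sum_range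
      (fun l => ∑' k, geomSum lam l k ^ m * (1 - rho lam k ^ m) * delta _ k), ← mul_add,
    ← Summable.tsum_finsetSum hsumA,
    ← (summable_geomSum_sub_one_pow_mul_delta hα hlam n).tsum_add (summable_sum hsumA),
    ← Summable.tsum_finsetSum fun l _ => summable_term hα hlam l]
  congr 1
  refine tsum_congr fun k => ?_
  simp only [term, ← Finset.sum_mul, ← add_mul, ← geomSum_sub_one_pow_add_sum hm n k]

end Telescoping

noncomputable def profile (α lam : ℝ) (m l : ℕ) (x : ℝ) : ℝ :=
  term α lam m l ⌊(l : ℝ) * x⌋₊ / (l : ℝ) ^ ((m : ℝ) + α - 1)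

noncomputable def limitProfile (α lam : ℝ) (m : ℕ) (x : ℝ) : ℝ :=
  x ^ α * (m * (x * (1 - Real.exp (-lam / x)) / lam) ^ (m - 1))

section Scaling

variable {α lam : ℝ} {m l : ℕ}

lemma term_div_rpow (hm : m ≠ 0) (hl : l ≠ 0) (k : ℕ) :
    term α lam m l k / (l : ℝ) ^ ((m : ℝ) + α - 1)
      = (((k : ℝ) + 1) / l) ^ α
        * ((geomSum lam l k ^ m - (geomSum lam l k - 1) ^ m) / (l : ℝ) ^ (m - 1)) := by
  have hl0 : (0 : ℝ) < l := by positivity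
  have hsplit : (l : ℝ) ^ ((m : ℝ) + α - 1) = (l : ℝ) ^ α * (l : ℝ) ^ (m - 1) := by
    rw [← Real.rpow_natCast, ← Real.rpow_add hl0, Nat.cast_sub (by omega)]
    ring_nf
  rw [hsplit, term, delta, Real.div_rpow (by positivity) hl0.le]
  field_simp

lemma integral_profile (hl : l ≠ 0)
    (hint : IntegrableOn (profile α lam m l) (Ioi 0)) :
    ∫ x in Ioi (0 : ℝ), profile α lam m l x = increment α lam m l / (l : ℝ) ^ ((m : ℝ) + α) := by
  have hl0 : (0 : ℝ) < l := by positivity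
  unfold profile at hint ⊢
  rw [integral_Ioi_comp_natFloor_mul
    (f := fun k => term α lam m l k / (l : ℝ) ^ ((m : ℝ) + α - 1)) hl0 hint, tsum_div_const,
    smul_eq_mul, ← div_eq_inv_mul, div_div, increment, ← Real.rpow_add_one hl0.ne', sub_add_cancel]

lemma profile_nonneg {x : ℝ} : 0 ≤ profile α lam m l x :=
  div_nonneg
    (mul_nonneg (pow_sub_pow_sub_one_nonneg one_le_geomSum m) (by unfold delta; positivity))
    (by positivity)

end Scaling

section Domination

variable {α lam : ℝ} {m : ℕ}

lemma pow_geomSum_div_le (hlam : 0 < lam) (hm : 2 ≤ m) {l : ℕ} (hl : l ≠ 0) (k : ℕ) :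
    (geomSum lam l k / l) ^ (m - 1)
      ≤ 2 ^ (m - 2) * ((2 + Real.exp lam / lam) * min 1 (((k : ℝ) + 1) / l)) := by
  set E := Real.exp lam / lam
  set y := ((k : ℝ) + 1) / l
  have hl0 : (0 : ℝ) < l := by positivity
  have hE : 0 ≤ E := by positivity
  have ht0 : 0 ≤ geomSum lam l k / l := by
    have := zero_le_one.trans (one_le_geomSum (lam := lam) (l := l) (k := k))
    positivity
  have ht2 : geomSum lam l k / l ≤ 2 := by
    rw [div_le_iff₀ hl0]
    have : (1 : ℝ) ≤ l := by exact_mod_cast Nat.one_le_iff_ne_zero.2 hl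
    linarith [geomSum_le (l := l) (k := k) hlam]
  have hty : geomSum lam l k / l ≤ E * y := by
    rw [mul_div_assoc']
    exact div_le_div_of_nonneg_right (geomSum_le_mul hlam) hl0.le
  have hmin : min 2 (E * y) ≤ (2 + E) * min 1 y := by
    rcases le_total 1 y with hy | hy
    · rw [min_eq_left hy]
      linarith [min_le_left 2 (E * y)]
    · rw [min_eq_right hy]
      nlinarith [min_le_right 2 (E * y), (by positivity : (0 : ℝ) ≤ y)]
  calc (geomSum lam l k / l) ^ (m - 1)
      = (geomSum lam l k / l) ^ (m - 2) * (geomSum lam l k / l) := by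
        rw [← pow_succ]
        congr 1
        omega
    _ ≤ 2 ^ (m - 2) * min 2 (E * y) :=
        mul_le_mul (pow_le_pow_left₀ ht0 ht2 _) (le_min ht2 hty) ht0 (by positivity)
    _ ≤ 2 ^ (m - 2) * ((2 + E) * min 1 y) := by gcongr

lemma exists_profile_le (hlam : 0 < lam) (hα : α < -1) (hm : 2 ≤ m) :
    ∃ C, ∀ l : ℕ, l ≠ 0 → ∀ x : ℝ, 0 < x →
      profile α lam m l x ≤ C * min (x ^ (α + 1)) (x ^ α) := by
  refine ⟨m * 2 ^ (m - 2) * (2 + Real.exp lam / lam), fun l hl x hx => ?_⟩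
  set k := ⌊(l : ℝ) * x⌋₊
  set y := ((k : ℝ) + 1) / l
  set S := geomSum lam l k
  have hl0 : (0 : ℝ) < l := by positivity
  have hxy : x < y := by
    rw [lt_div_iff₀ hl0]
    linarith [Nat.lt_floor_add_one ((l : ℝ) * x)]
  have hy : 0 < y := hx.trans hxy
  have hD : (S ^ m - (S - 1) ^ m) / (l : ℝ) ^ (m - 1) ≤ m * (S / l) ^ (m - 1) := by
    rw [div_pow, mul_div_assoc']
    exact div_le_div_of_nonneg_right (pow_sub_pow_sub_one_le one_le_geomSum m) (by positivity)
  have hymin : y ^ α * min 1 y = min (y ^ (α + 1)) (y ^ α) := by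
    rw [mul_min_of_nonneg _ _ (Real.rpow_nonneg hy.le α), mul_one, ← Real.rpow_add_one hy.ne',
      min_comm]
  have hmono : min (y ^ (α + 1)) (y ^ α) ≤ min (x ^ (α + 1)) (x ^ α) :=
    min_le_min (Real.rpow_le_rpow_of_nonpos hx hxy.le (by linarith))
      (Real.rpow_le_rpow_of_nonpos hx hxy.le (by linarith))
  calc profile α lam m l x = y ^ α * ((S ^ m - (S - 1) ^ m) / (l : ℝ) ^ (m - 1)) :=
        term_div_rpow (by omega) hl k
    _ ≤ y ^ α * (m * (2 ^ (m - 2) * ((2 + Real.exp lam / lam) * min 1 y))) := by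
        gcongr
        exact hD.trans (by gcongr; exact pow_geomSum_div_le hlam hm hl k)
    _ = m * 2 ^ (m - 2) * (2 + Real.exp lam / lam) * (y ^ α * min 1 y) := by ring
    _ ≤ m * 2 ^ (m - 2) * (2 + Real.exp lam / lam) * min (x ^ (α + 1)) (x ^ α) := by
        rw [hymin]
        gcongr

end Domination

section PointwiseLimit

variable {α lam : ℝ} {m : ℕ}

lemma geomSum_div_eq (hlam : 0 < lam) {l : ℕ} (hl : l ≠ 0) (k : ℕ) :
    geomSum lam l k / l
      = (1 - Real.exp (-((l + 1) * (lam / ((k : ℝ) + 1))))) / (l * (lam / ((k : ℝ) + 1)))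
        / ((1 - Real.exp (-(lam / ((k : ℝ) + 1)))) / (lam / ((k : ℝ) + 1))) := by
  have hρ : rho lam k = Real.exp (-(lam / ((k : ℝ) + 1))) := by rw [rho, neg_div]
  have hρ1 : 1 - Real.exp (-(lam / ((k : ℝ) + 1))) ≠ 0 := hρ ▸ (sub_pos.2 (rho_lt_one hlam)).ne'
  have hs : lam / ((k : ℝ) + 1) ≠ 0 := by positivity
  rw [geomSum_eq_div hlam, hρ, ← Real.exp_nat_mul]
  push_cast
  field_simp

lemma tendsto_geomSum_div (hlam : 0 < lam) {k : ℕ → ℕ} {x : ℝ} (hx : 0 < x)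
    (hk : Tendsto (fun l : ℕ => ((k l : ℝ) + 1) / l) atTop (𝓝 x)) :
    Tendsto (fun l : ℕ => geomSum lam l (k l) / l) atTop
      (𝓝 (x * (1 - Real.exp (-lam / x)) / lam)) := by
  set s : ℕ → ℝ := fun l => lam / ((k l : ℝ) + 1)
  have hls : Tendsto (fun l : ℕ => l * s l) atTop (𝓝 (lam / x)) := by
    refine (tendsto_const_nhds.div hk hx.ne').congr' ?_
    filter_upwards [eventually_ne_atTop 0] with l hl
    simp only [Pi.div_apply, s]
    field_simp
  have hs0 : Tendsto s atTop (𝓝 0) := by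
    have h := hls.mul tendsto_one_div_atTop_nhds_zero_nat
    rw [mul_zero] at h
    refine h.congr' ?_
    filter_upwards [eventually_ne_atTop 0] with l hl
    field_simp
  have hslope : Tendsto (fun l => (1 - Real.exp (-s l)) / s l) atTop (𝓝 1) :=
    tendsto_one_sub_exp_neg_div.comp
      (tendsto_nhdsWithin_iff.2 ⟨hs0, Eventually.of_forall fun l => (by positivity : 0 < s l).ne'⟩)
  have hexp : Tendsto (fun l : ℕ => Real.exp (-((l + 1) * s l))) atTop
      (𝓝 (Real.exp (-(lam / x)))) := by
    have h := hls.add hs0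
    rw [add_zero] at h
    refine (Real.continuous_exp.tendsto _).comp (h.neg.congr fun l => ?_)
    ring
  have hlim := (((tendsto_const_nhds (x := (1 : ℝ))).sub hexp).div hls (by positivity)).div
    hslope one_ne_zero
  have hval :
      (1 - Real.exp (-(lam / x))) / (lam / x) / 1 = x * (1 - Real.exp (-lam / x)) / lam := by
    rw [neg_div]
    field_simp
  rw [hval] at hlim
  refine hlim.congr' ?_
  filter_upwards [eventually_ne_atTop 0] with l hl
  exact (geomSum_div_eq hlam hl (k l)).symm

end PointwiseLimit

section IncrementAsymptotics

variable {α lam : ℝ} {m : ℕ}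

lemma tendsto_profile (hlam : 0 < lam) (hm : m ≠ 0) {x : ℝ} (hx : 0 < x) :
    Tendsto (fun l : ℕ => profile α lam m l x) atTop (𝓝 (limitProfile α lam m x)) := by
  have hy := tendsto_natFloor_mul_add_one_div hx.le
  have hS := tendsto_pow_sub_pow_sub_one_div (tendsto_geomSum_div hlam hx hy) m
  refine ((hy.rpow_const (Or.inl hx.ne')).mul hS).congr' ?_
  filter_upwards [eventually_ne_atTop 0] with l hl
  exact (term_div_rpow hm hl _).symm

lemma limitProfile_pos (hlam : 0 < lam) (hm : m ≠ 0) {x : ℝ} (hx : 0 < x) :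
    0 < limitProfile α lam m x := by
  have hexp : 0 < 1 - Real.exp (-lam / x) :=
    sub_pos.2 (Real.exp_lt_one_iff.2 (div_neg_of_neg_of_pos (by linarith) hx))
  have hm₀ : (0 : ℝ) < m := by exact_mod_cast Nat.pos_of_ne_zero hm
  unfold limitProfile
  positivity

lemma measurable_profile {l : ℕ} : Measurable (profile α lam m l) :=
  ((measurable_from_top (f := term α lam m l)).comp
    (Nat.measurable_floor.comp (measurable_const_mul (l : ℝ)))).div_const _

lemma tendsto_increment_div_rpow (hlam : 0 < lam) (hα₁ : -2 < α) (hα₂ : α < -1) (hm : 2 ≤ m) :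
    ∃ c, 0 < c ∧
      Tendsto (fun l : ℕ => increment α lam m l / (l : ℝ) ^ ((m : ℝ) + α)) atTop (𝓝 c) := by
  obtain ⟨C, hC⟩ := exists_profile_le hlam hα₂ hm
  set bound := fun x : ℝ => C * min (x ^ (α + 1)) (x ^ α)
  have hbound : IntegrableOn bound (Ioi 0) := (integrableOn_Ioi_min_rpow hα₁ hα₂).const_mul C
  have hmeas : ∀ l, AEStronglyMeasurable (profile α lam m l) (volume.restrict (Ioi 0)) :=
    fun l => measurable_profile.aestronglyMeasurable
  have hnorm : ∀ l, l ≠ 0 → ∀ x ∈ Ioi (0 : ℝ), ‖profile α lam m l x‖ ≤ bound x :=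
    fun l hl x hx => (Real.norm_of_nonneg profile_nonneg).trans_le (hC l hl x hx)
  have hle : ∀ l, l ≠ 0 → ∀ᵐ x ∂(volume.restrict (Ioi 0)), ‖profile α lam m l x‖ ≤ bound x :=
    fun l hl => ae_restrict_of_forall_mem measurableSet_Ioi (hnorm l hl)
  have hlim : ∀ x ∈ Ioi (0 : ℝ),
      Tendsto (fun l : ℕ => profile α lam m l x) atTop (𝓝 (limitProfile α lam m x)) :=
    fun x hx => tendsto_profile hlam (by omega) hx
  have hlim_ae := ae_restrict_of_forall_mem (μ := volume) measurableSet_Ioi hlim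
  have hint : IntegrableOn (limitProfile α lam m) (Ioi 0) :=
    hbound.mono' (aestronglyMeasurable_of_tendsto_ae _ hmeas hlim_ae)
      (ae_restrict_of_forall_mem measurableSet_Ioi fun x hx =>
        le_of_tendsto (hlim x hx).norm ((eventually_ne_atTop 0).mono fun l hl => hnorm l hl x hx))
  refine ⟨∫ x in Ioi 0, limitProfile α lam m x,
    setIntegral_Ioi_pos hint fun x hx => limitProfile_pos hlam (by omega) hx, ?_⟩
  refine (tendsto_integral_filter_of_dominated_convergence bound (Eventually.of_forall hmeas)
    ((eventually_ne_atTop 0).mono hle) hbound hlim_ae).congr' ?_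
  filter_upwards [eventually_ne_atTop 0] with l hl
  exact integral_profile hl (hbound.mono' (hmeas l) (hle l hl))

end IncrementAsymptotics

end OUCumulant

/-- there is a finite strictly positive constant `D_m` such that
`κ_m(n)/n^{m-2(1-H)} → D_m` as `n → ∞`: the `m`-th cumulant of the centered partial sum
grows like `D_m n^{m-2(1-H)}` (up to the convergent slowly varying factor `L(n)`). -/
theorem stmt14 (H lam Cm : ℝ) (hH : H ∈ Set.Ioo (1 / 2 : ℝ) 1) (hlam : 0 < lam)
    (hCm : 0 < Cm) (m : ℕ) (hm : 2 ≤ m) :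
    ∃ D : ℝ, 0 < D ∧
      Tendsto (fun n : ℕ =>
          OUcumulant H lam Cm m n / (n : ℝ) ^ ((m : ℝ) - 2 * (1 - H)))
        atTop (nhds D) := by
  obtain ⟨hH₁, hH₂⟩ := hH
  have hm₀ : (2 : ℝ) ≤ m := by exact_mod_cast hm
  obtain ⟨c, hc, hlim⟩ :=
    OUCumulant.tendsto_increment_div_rpow (α := -(1 + 2 * (1 - H))) hlam (by linarith)
      (by linarith) hm
  have hb : 0 < (m : ℝ) + -(1 + 2 * (1 - H)) := by linarith
  refine ⟨Cm * (c / ((m : ℝ) + -(1 + 2 * (1 - H)) + 1)), by positivity,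
    ((hlim.sum_range_div_rpow hb).const_mul Cm).congr fun n => ?_⟩
  have hexp : (m : ℝ) - 2 * (1 - H) = (m : ℝ) + -(1 + 2 * (1 - H)) + 1 := by ring
  rw [OUCumulant.OUcumulant_eq_sum_increment hH₂ hlam (by omega), mul_div_assoc, hexp]
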